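/- arXiv:math/0105178 — 5 statements merged into one kernel-verified Lean document; each statement's English description precedes it below -/
import Mathlib

section
/- Let V and W be cyclic words that are not both powers of one common cyclic word, and let P be a linear word that is a subword of V^k and a subword of W^l, where (k-1)·len(V) < len(P) and (l-1)·len(W) < len(P). Then len(P) < len(V) + len(W). -/
/-!
STATEMENT 1 (Lemma 2.10): if the cyclic words `V` and `W` are not both powers
of one common cyclic word and the linear word `P` is a subword of `V^k` and of
`W^l`, with `(k-1)·len V < len P` and `(l-1)·len W < len P`, then
`len P < len V + len W`.
-/

open List

/-- The `k`-th power of a (linear representative of a) cyclic word. -/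
def cpow {α : Type*} (V : List α) (k : ℕ) : List α := (List.replicate k V).flatten

/-- `P` is a subword of the cyclic word `V^k`: it occurs as a consecutive block
in some linear representative of `V^k`. -/
def SubwordOfPow {α : Type*} (P V : List α) (k : ℕ) : Prop :=
  ∃ i, P <:+: (cpow V k).rotate i

lemma cpow_succ {α : Type*} (V : List α) (k : ℕ) : cpow V (k + 1) = V ++ cpow V k := by
  simp [cpow, List.replicate_succ]

lemma cpow_succ' {α : Type*} (V : List α) (k : ℕ) : cpow V (k + 1) = cpow V k ++ V := by
  simp [cpow, List.replicate_succ']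

lemma cpow_add {α : Type*} (V : List α) (a b : ℕ) :
    cpow V (a + b) = cpow V a ++ cpow V b := by
  unfold cpow
  rw [List.replicate_add, List.flatten_append]

lemma length_cpow {α : Type*} (V : List α) (k : ℕ) :
    (cpow V k).length = k * V.length := by
  simp [cpow, Nat.mul_comm]

lemma cpow_swap {α : Type*} (x y : List α) (k : ℕ) :
    y ++ cpow (x ++ y) k = cpow (y ++ x) k ++ y := by
  induction k with
  | zero => simp [cpow]
  | succ n ih =>
      rw [cpow_succ, cpow_succ']
      calc y ++ ((x ++ y) ++ cpow (x ++ y) n) = (y ++ x) ++ (y ++ cpow (x ++ y) n) := by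
            simp [List.append_assoc]
        _ = (y ++ x) ++ (cpow (y ++ x) n ++ y) := by rw [ih]
        _ = ((y ++ x) ++ cpow (y ++ x) n) ++ y := by simp [List.append_assoc]
        _ = (cpow (y ++ x) n ++ (y ++ x)) ++ y := by rw [← cpow_succ, cpow_succ']

lemma cpow_rotate {α : Type*} (V : List α) (k : ℕ) :
    ∀ j, (cpow V k).rotate j = cpow (V.rotate j) k := by
  intro j
  induction j using Nat.strong_induction_on with
  | _ j ih =>
    rcases eq_or_ne V [] with rfl | hV
    · simp [cpow]
    rcases le_or_gt j V.length with hj | hj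
    · rcases k with _ | k'
      · simp [cpow]
      · have hjlen : j ≤ (cpow V (k' + 1)).length := by
          rw [length_cpow]
          calc j ≤ V.length := hj
            _ ≤ (k' + 1) * V.length := Nat.le_mul_of_pos_left _ (Nat.succ_pos _)
        rw [List.rotate_eq_drop_append_take hjlen, cpow_succ,
          List.drop_append_of_le_length hj, List.take_append_of_le_length hj]
        have hVsplit : cpow V k' = cpow (V.take j ++ V.drop j) k' := by
          rw [List.take_append_drop]
        rw [List.rotate_eq_drop_append_take hj, hVsplit, cpow_swap,
          List.append_assoc, ← cpow_succ']
    · have hVpos : 0 < V.length := List.length_pos_iff.mpr hV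
      set j' := j - V.length with hj'
      have hjj : j = V.length + j' := by omega
      have h1 : (cpow V k).rotate j = ((cpow V k).rotate V.length).rotate j' := by
        rw [List.rotate_rotate, ← hjj]
      have h2 : (cpow V k).rotate V.length = cpow V k := by
        rw [ih V.length (by omega), List.rotate_length]
      have h3 : V.rotate j = V.rotate j' := by
        conv_lhs => rw [hjj, ← List.rotate_rotate, List.rotate_length]
      rw [h1, h2, ih j' (by omega), h3]

/-- From a subword occurrence we get a rotation of `V` of whose power `P` is a prefix. -/
lemma subword_exists_prefix {α : Type*} (P V : List α) (k i : ℕ)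
    (h : P <:+: (cpow V k).rotate i) :
    ∃ V', V ~r V' ∧ V'.length = V.length ∧ P <+: cpow V' k := by
  obtain ⟨s, t, hst⟩ := h
  refine ⟨V.rotate (i + s.length), ⟨i + s.length, rfl⟩, List.length_rotate .., ?_⟩
  have hrot : (cpow V k).rotate (i + s.length) = (P ++ t) ++ s := by
    rw [← List.rotate_rotate, ← hst, List.append_assoc, List.rotate_append_length_eq]
  rw [← cpow_rotate, hrot]
  exact ⟨t ++ s, by simp⟩

/-- Commuting words are powers of a common word (auxiliary, bounded version). -/
lemma comm_aux {α : Type*} : ∀ (n : ℕ) (u w : List α), u.length ≤ w.length →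
    u.length + w.length ≤ n →
    u ++ w = w ++ u → ∃ (z : List α) (a b : ℕ), cpow z a = u ∧ cpow z b = w := by
  intro n
  induction n with
  | zero =>
      intro u w _ hn _
      have hu : u = [] := List.eq_nil_of_length_eq_zero (by omega)
      have hw : w = [] := List.eq_nil_of_length_eq_zero (by omega)
      exact ⟨[], 0, 0, by simp [cpow, hu], by simp [cpow, hw]⟩
  | succ n ih =>
      intro u w hle hn h
      rcases eq_or_ne u [] with rfl | hu
      · exact ⟨w, 0, 1, by simp [cpow], by simp [cpow]⟩
      have hupos : 0 < u.length := List.length_pos_iff.mpr hu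
      -- u is a prefix of w
      have hu_take : u = w.take u.length := by
        have h2 : (w ++ u).take u.length = w.take u.length :=
          List.take_append_of_le_length hle
        rw [← h2, ← h, List.take_left]
      set w' := w.drop u.length with hw'def
      have hwdecomp : w = u ++ w' := by
        conv_lhs => rw [← List.take_append_drop u.length w, ← hu_take]
      have hcomm' : u ++ w' = w' ++ u := by
        apply List.append_cancel_left (as := u)
        calc u ++ (u ++ w') = u ++ w := by rw [hwdecomp]
          _ = w ++ u := h
          _ = u ++ (w' ++ u) := by rw [hwdecomp, List.append_assoc]
      have hw'len : w'.length = w.length - u.length := by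
        simp [hw'def]
      rcases le_total u.length w'.length with hle' | hle'
      · obtain ⟨z, a, b, hza, hzb⟩ := ih u w' hle' (by omega) hcomm'
        exact ⟨z, a, a + b, hza, by rw [cpow_add, hza, hzb, ← hwdecomp]⟩
      · obtain ⟨z, a, b, hza, hzb⟩ := ih w' u hle' (by omega) hcomm'.symm
        exact ⟨z, b, b + a, hzb, by rw [cpow_add, hza, hzb, ← hwdecomp]⟩

/-- Commuting words are powers of a common word. -/
lemma comm_lists {α : Type*} (u w : List α) (h : u ++ w = w ++ u) :
    ∃ (z : List α) (a b : ℕ), cpow z a = u ∧ cpow z b = w := by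
  rcases le_total u.length w.length with hle | hle
  · exact comm_aux (u.length + w.length) u w hle le_rfl h
  · obtain ⟨z, a, b, hza, hzb⟩ :=
      comm_aux (w.length + u.length) w u hle le_rfl h.symm
    exact ⟨z, b, a, hzb, hza⟩

/-- If `Q` is a prefix of `cpow V' k` with `Q.length = V'.length + m`, then
the first `V'.length` letters of `Q` are `V'` and `Q.drop V'.length = Q.take m`. -/
lemma prefix_key {α : Type*} (Q V' : List α) (k m : ℕ) (hV' : V' ≠ [])
    (hpre : Q <+: cpow V' k) (hlen : Q.length = V'.length + m) :
    Q.take V'.length = V' ∧ Q.drop V'.length = Q.take m := by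
  have hVpos : 0 < V'.length := List.length_pos_iff.mpr hV'
  have hQlen : Q.length ≤ k * V'.length := by
    have := hpre.length_le; rwa [length_cpow] at this
  rcases k with _ | k'
  · omega
  have hm : m ≤ k' * V'.length := by
    have : (k' + 1) * V'.length = k' * V'.length + V'.length := by ring
    omega
  have hQ : Q = (cpow V' (k' + 1)).take Q.length :=
    List.prefix_iff_eq_take.mp hpre
  have hQ2 : Q = V' ++ (cpow V' k').take m := by
    rw [hQ, cpow_succ, List.take_append,
      List.take_of_length_le (by omega), hlen, Nat.add_sub_cancel_left]
  constructor
  · rw [hQ2, List.take_left]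
  · have hdrop : Q.drop V'.length = (cpow V' k').take m := by
      rw [hQ2, List.drop_left]
    have htake : Q.take m = (cpow V' k').take m := by
      rw [hQ, List.take_take, min_eq_left (by omega), cpow_succ',
        List.take_append_of_le_length (by rw [length_cpow]; exact hm)]
    rw [hdrop, htake]

theorem subword_of_two_powers_length_lt {α : Type*} (V W P : List α) (k l : ℕ)
    (hV : V ≠ []) (hW : W ≠ [])
    (hnc : ¬ ∃ (X : List α) (a b : ℕ), 1 ≤ a ∧ 1 ≤ b ∧
      cpow X a ~r V ∧ cpow X b ~r W)
    (h1 : SubwordOfPow P V k) (h2 : SubwordOfPow P W l)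
    (h3 : (k - 1) * V.length < P.length) (h4 : (l - 1) * W.length < P.length) :
    P.length < V.length + W.length := by
  by_contra hcon
  push_neg at hcon
  obtain ⟨i, hi⟩ := h1
  obtain ⟨j, hj⟩ := h2
  obtain ⟨V', hVrot, hVlen, hVpre⟩ := subword_exists_prefix P V k i hi
  obtain ⟨W', hWrot, hWlen, hWpre⟩ := subword_exists_prefix P W l j hj
  have hV' : V' ≠ [] := by
    intro hnil; apply hV
    rw [← List.length_eq_zero_iff, ← hVlen, hnil]; rfl
  have hW' : W' ≠ [] := by
    intro hnil; apply hW
    rw [← List.length_eq_zero_iff, ← hWlen, hnil]; rfl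
  set n := V.length + W.length with hn
  set Q := P.take n with hQdef
  have hQlen : Q.length = n := by
    rw [hQdef, List.length_take, min_eq_left hcon]
  have hQV : Q <+: cpow V' k := (List.take_prefix n P).trans hVpre
  have hQW : Q <+: cpow W' l := (List.take_prefix n P).trans hWpre
  obtain ⟨hV1, hV2⟩ := prefix_key Q V' k W.length hV' hQV (by rw [hQlen, hVlen])
  obtain ⟨hW1, hW2⟩ := prefix_key Q W' l V.length hW' hQW (by rw [hQlen, hWlen, hn]; ring)
  have hQ1 : Q = V' ++ W' := by
    conv_lhs => rw [← List.take_append_drop V'.length Q]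
    rw [hV1, hV2, ← hWlen, hW1]
  have hQ2 : Q = W' ++ V' := by
    conv_lhs => rw [← List.take_append_drop W'.length Q]
    rw [hW1, hW2, ← hVlen, hV1]
  have hcomm : V' ++ W' = W' ++ V' := by rw [← hQ1, ← hQ2]
  obtain ⟨z, a, b, hza, hzb⟩ := comm_lists V' W' hcomm
  apply hnc
  refine ⟨z, a, b, ?_, ?_, ?_, ?_⟩
  · rcases Nat.eq_zero_or_pos a with rfl | ha
    · exact absurd hza.symm (by simpa [cpow] using hV')
    · exact ha
  · rcases Nat.eq_zero_or_pos b with rfl | hb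
    · exact absurd hzb.symm (by simpa [cpow] using hW')
    · exact hb
  · rw [hza]; exact hVrot.symm
  · rw [hzb]; exact hWrot.symm
end

section
/- Let W be a reduced cyclic word and (P,Q) a linked pair of occurrences of subwords of W of type (3), with P = p₁ Y p₂ and Q = q₁ Ȳ q₂. Then W can be written as c(Y W₁ Ȳ W₂) where W₁ and W₂ are disjoint nonempty linear subwords of W (W₁ starting at p₂ and ending at q₁, W₂ starting at q₂ and ending at p₁). -/
/-!
Combinatorial model of the Goldman–Turaev Lie bialgebra of curves on a surface
with boundary, following M. Chas, "Combinatorial Lie bialgebras of curves on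
surfaces".

The alphabet `𝔸ₙ = {a₁,…,aₙ, ā₁,…,āₙ}` is modelled by `Letter n := Fin n × Bool`,
with the bar involution flipping the boolean.  Linear words are lists of letters;
a cyclic word is a list up to rotation (`List.IsRotated`).
-/

open List

abbrev Letter (n : ℕ) := Fin n × Bool

namespace ChasCW

variable {n : ℕ}

/-- The bar involution `x ↦ x̄` on letters. -/
def bar (x : Letter n) : Letter n := (x.1, !x.2)

/-- The formal inverse `W̄` of a linear word `W`. -/
def wordInv (w : List (Letter n)) : List (Letter n) := (w.map bar).reverse

/-- A linear word is freely reduced if no letter is followed by its inverse. -/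
def Reduced (w : List (Letter n)) : Prop := w.Chain' (fun a b => b ≠ bar a)

/-- A nonempty word all of whose cyclic rotations are freely reduced:
a representative of a reduced cyclic word. -/
def CyclicallyReduced (w : List (Letter n)) : Prop :=
  w ≠ [] ∧ ∀ i, Reduced (w.rotate i)

/-- The type of cyclic words: lists of letters up to rotation. -/
abbrev CWord (n : ℕ) := Quotient (List.IsRotated.setoid (Letter n))

/-- The cyclic word `c(w)` determined by a linear word `w`. -/
def cw (w : List (Letter n)) : CWord n := Quotient.mk _ w

/-- A surface symbol: a reduced cyclic word containing every letter of the
alphabet exactly once. -/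
def SurfaceSymbol (O : List (Letter n)) : Prop :=
  CyclicallyReduced O ∧ ∀ x : Letter n, O.count x = 1

/-- `w` embeds injectively and orientation-preservingly as a cyclic subsequence
of the cyclic word `O`. -/
def CyclicEmbeds (w O : List (Letter n)) : Prop :=
  w.Nodup ∧ ∃ i ≤ w.length, ∃ j ≤ O.length, (w.rotate i).Sublist (O.rotate j)

open Classical in
/-- The orientation `o(w) ∈ {-1,0,1}` of a cyclic word relative to the surface
symbol `O`: `1` for an orientation-preserving embedding of rings, `-1` for an
orientation-reversing one, `0` otherwise. -/
noncomputable def orient (O w : List (Letter n)) : ℤ :=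
  if CyclicEmbeds w O then 1 else if CyclicEmbeds w O.reverse then -1 else 0

/-- Case (1) of Definition 2.1: `P = p₁p₂`, `Q = q₁q₂` and
`o(c(p̄₁q̄₁p₂q₂)) ≠ 0`. -/
def Linked1 (O : List (Letter n)) (p₁ p₂ q₁ q₂ : Letter n) : Prop :=
  Reduced [p₁, p₂] ∧ Reduced [q₁, q₂] ∧ orient O [bar p₁, bar q₁, p₂, q₂] ≠ 0

/-- Case (2) of Definition 2.1: `P = p₁Yp₂`, `Q = q₁Yq₂`, `p₁ ≠ q₁`, `p₂ ≠ q₂`,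
`Y = x₁X x₂` nonempty, and `o(c(p̄₁q̄₁x₁)) = o(c(p₂q₂x̄₂))`. -/
def Linked2 (O : List (Letter n)) (p₁ p₂ q₁ q₂ x₁ x₂ : Letter n)
    (Y : List (Letter n)) : Prop :=
  Y ≠ [] ∧ Y.head? = some x₁ ∧ Y.getLast? = some x₂ ∧
  p₁ ≠ q₁ ∧ p₂ ≠ q₂ ∧
  Reduced (p₁ :: (Y ++ [p₂])) ∧ Reduced (q₁ :: (Y ++ [q₂])) ∧
  orient O [bar p₁, bar q₁, x₁] = orient O [p₂, q₂, bar x₂]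

/-- Case (3) of Definition 2.1: `P = p₁Yp₂`, `Q = q₁Ȳq₂`, `p₁ ≠ q̄₂`, `p₂ ≠ q̄₁`,
`Y = x₁X x₂` nonempty, and `o(c(q₂p̄₁x₁)) = o(c(q̄₁p₂x̄₂))`. -/
def Linked3 (O : List (Letter n)) (p₁ p₂ q₁ q₂ x₁ x₂ : Letter n)
    (Y : List (Letter n)) : Prop :=
  Y ≠ [] ∧ Y.head? = some x₁ ∧ Y.getLast? = some x₂ ∧
  p₁ ≠ bar q₂ ∧ p₂ ≠ bar q₁ ∧
  Reduced (p₁ :: (Y ++ [p₂])) ∧ Reduced (q₁ :: (wordInv Y ++ [q₂])) ∧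
  orient O [q₂, bar p₁, x₁] = orient O [bar q₁, p₂, bar x₂]

/-- `(P,Q)` is an `O`-linked pair (Definition 2.1). -/
def LinkedPair (O P Q : List (Letter n)) : Prop :=
  (∃ p₁ p₂ q₁ q₂, P = [p₁, p₂] ∧ Q = [q₁, q₂] ∧ Linked1 O p₁ p₂ q₁ q₂) ∨
  (∃ p₁ p₂ q₁ q₂ x₁ x₂ Y, P = p₁ :: (Y ++ [p₂]) ∧ Q = q₁ :: (Y ++ [q₂]) ∧
    Linked2 O p₁ p₂ q₁ q₂ x₁ x₂ Y) ∨
  (∃ p₁ p₂ q₁ q₂ x₁ x₂ Y, P = p₁ :: (Y ++ [p₂]) ∧ Q = q₁ :: (wordInv Y ++ [q₂]) ∧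
    Linked3 O p₁ p₂ q₁ q₂ x₁ x₂ Y)

/-- The sign of a linked pair `(P,Q)`, computed from the (unique) decomposition
of `P` and `Q` prescribed by Definition 2.1. -/
noncomputable def signLP (O P Q : List (Letter n)) : ℤ :=
  match P, Q with
  | p₁ :: P', q₁ :: Q' =>
    match P'.getLast?, Q'.getLast? with
    | some p₂, some q₂ =>
      let Y := P'.dropLast
      let Z := Q'.dropLast
      if Y = [] then orient O [bar p₁, bar q₁, p₂, q₂]
      else
        match Y.head?, Y.getLast? with
        | some x₁, some _ =>
          if Z = wordInv Y then orient O [q₂, bar p₁, x₁]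
          else orient O [bar p₁, bar q₁, x₁]
        | _, _ => 0
    | _, _ => 0
  | _, _ => 0

/-- The subword of length `l` of (a large power of) the cyclic word `V`,
starting at position `i`.  This encodes occurrences of subwords of powers
of `V`. -/
def segment (V : List (Letter n)) (i l : ℕ) : List (Letter n) :=
  (((List.replicate (l + 1) V).flatten).rotate i).take l

/-- The set `LP₁(W)` of linked pairs of occurrences of subwords of `W`,
an occurrence being encoded by its starting position and its length. -/
def LP1 (O W : List (Letter n)) : Set ((ℕ × ℕ) × (ℕ × ℕ)) :=
  {e | e.1.1 < W.length ∧ e.2.1 < W.length ∧ e.1.2 ≤ W.length ∧ e.2.2 ≤ W.length ∧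
    LinkedPair O (segment W e.1.1 e.1.2) (segment W e.2.1 e.2.2)}

/-- The set `LP₂(V,W)` of linked pairs of the pair of cyclic words `(V,W)`:
pairs of occurrences of subwords of powers of `V` resp. `W` which are linked.
(The normalization `len V^{j-1} < len P ≤ len V^j` is implicit in the encoding
of an occurrence by a starting position `< len V` and a length.) -/
def LP2 (O V W : List (Letter n)) : Set ((ℕ × ℕ) × (ℕ × ℕ)) :=
  {e | e.1.1 < V.length ∧ e.2.1 < W.length ∧
    LinkedPair O (segment V e.1.1 e.1.2) (segment W e.2.1 e.2.2)}

end ChasCW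

/-!
Read `W` from the letter after `p₁`: it is `Y Z` with `Z = p₂ ⋯ p₁`. In the cyclic word `c(Y Z)`
the occurrence of `Ȳ` can neither overlap nor abut a copy of `Y`: the reflection exchanging `Y`
and `Ȳ` would have its centre inside them, forcing a letter to equal its own inverse or to be
followed by it. Hence `q₁ Ȳ q₂` is a subword of `Z`, and `Z = W₁ Ȳ W₂` splits around it.
-/

namespace ChasCW

variable {n : ℕ}

@[simp]
lemma bar_bar (x : Letter n) : bar (bar x) = x := by simp [bar]

lemma bar_ne_self (x : Letter n) : bar x ≠ x := by simp [bar, Prod.ext_iff]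

lemma getElem_wordInv (w : List (Letter n)) (k : ℕ) (hk : k < (wordInv w).length) :
    (wordInv w)[k] = bar (w[w.length - 1 - k]'(by simp [wordInv] at hk; omega)) := by
  simp [wordInv, List.getElem_reverse]

lemma not_inverse_overlap {u : ℕ → Letter n} (hu : ∀ k, u (k + 1) ≠ bar (u k)) {m t : ℕ}
    (hm : 0 < m) (ht : t ≤ m) : ¬ ∀ k < m, u (t + k) = bar (u (m - 1 - k)) := by
  intro h
  rcases Nat.even_or_odd' (m - 1 + t) with ⟨d, hd | hd⟩
  · have hcentre := h (d - t) (by omega)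
    rw [show t + (d - t) = d by omega, show m - 1 - (d - t) = d by omega] at hcentre
    exact bar_ne_self _ hcentre.symm
  · have hcentre := h (d + 1 - t) (by omega)
    rw [show t + (d + 1 - t) = d + 1 by omega, show m - 1 - (d + 1 - t) = d by omega] at hcentre
    exact hu d hcentre

lemma CyclicallyReduced.rotate {w : List (Letter n)} (hw : CyclicallyReduced w) (r : ℕ) :
    CyclicallyReduced (w.rotate r) :=
  ⟨by simpa using hw.1, fun k => by simpa [List.rotate_rotate] using hw.2 (r + k)⟩

lemma CyclicallyReduced.getElem_succ_mod_ne_bar {w : List (Letter n)} (hw : CyclicallyReduced w)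
    (k : ℕ) (hL : 0 < w.length) :
    w[(k + 1) % w.length]'(Nat.mod_lt _ hL) ≠ bar (w[k % w.length]'(Nat.mod_lt _ hL)) := by
  rcases Nat.lt_or_ge 1 w.length with hL1 | hL1
  · have hchain : List.IsChain (fun a b => b ≠ bar a) (w.rotate k) := hw.2 k
    have h := List.isChain_iff_getElem.1 hchain 0 (by simpa using hL1)
    simpa [List.getElem_rotate, Nat.add_comm] using h
  · have h1 : w.length = 1 := by omega
    simp only [h1, Nat.mod_one]
    exact (bar_ne_self _).symm

lemma _root_.List.IsPrefix.getElem_mod_of_rotate {α : Type*} {w z : List α} {s : ℕ}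
    (h : z <+: w.rotate s) (k : ℕ) (hk : k < z.length) (hL : 0 < w.length) :
    w[(s + k) % w.length]'(Nat.mod_lt _ hL) = z[k] := by
  rw [h.getElem hk, List.getElem_rotate]
  simp [Nat.add_comm]

lemma exists_rotate_succ_eq_of_prefix {α : Type*} {w l : List α} {a : α} {i : ℕ}
    (h : a :: l <+: w.rotate i) : ∃ r, w.rotate (i + 1) = l ++ r ++ [a] := by
  obtain ⟨r, hr⟩ := h
  exact ⟨r, by rw [← List.rotate_rotate, ← hr]; simp⟩

lemma isInfix_of_isPrefix_rotate_append {Y Z : List (Letter n)} (hV : CyclicallyReduced (Y ++ Z))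
    (hY : Y ≠ []) {q₁ q₂ : Letter n} {s : ℕ}
    (hQ : q₁ :: (wordInv Y ++ [q₂]) <+: (Y ++ Z).rotate s) :
    q₁ :: (wordInv Y ++ [q₂]) <:+: Z := by
  set V := Y ++ Z
  set m := Y.length
  have hm : 0 < m := List.length_pos_iff.2 hY
  have hL : 0 < V.length := List.length_pos_iff.2 hV.1
  set L := V.length
  rw [← List.rotate_mod] at hQ
  have hs : s % L < L := Nat.mod_lt _ hL
  generalize s % L = s at hQ hs
  have hlen : m + 2 ≤ L := by
    have h := hQ.length_le
    simp only [List.length_cons, List.length_append, wordInv, List.length_reverse,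
      List.length_map, List.length_rotate] at h
    omega
  let v : ℕ → Letter n := fun k => V[k % L]'(Nat.mod_lt _ hL)
  have hv : ∀ k, v (k + 1) ≠ bar (v k) := fun k => hV.getElem_succ_mod_ne_bar k hL
  have hv_periodic : ∀ k, v (k + L) = v k := fun k => by simp [v]
  have hvY : ∀ k (hk : k < m), v k = Y[k] := fun k hk => by
    simp [v, V, Nat.mod_eq_of_lt (show k < L by omega), List.getElem_append_left hk]
  have hvQ : ∀ k < m, v (s + 1 + k) = bar (v (m - 1 - k)) := fun k hk => by
    have h := hQ.getElem_mod_of_rotate (k + 1) (by simp [wordInv]; omega) hL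
    rw [List.getElem_cons_succ,
      List.getElem_append_left (show k < (wordInv Y).length by simp [wordInv]; omega),
      getElem_wordInv] at h
    rw [hvY (m - 1 - k) (by omega), ← h]
    simp only [v, Nat.add_right_comm s 1 k, Nat.add_assoc, L]
  rcases (show s < m ∨ L ≤ s + 1 + m ∨ (m ≤ s ∧ s + m + 2 ≤ L) by omega)
    with hnear | hwrap | ⟨hm_le, hfit⟩
  · exact absurd hvQ (not_inverse_overlap hv hm (by omega))
  · -- `Ȳ` runs into the next copy of `Y`: exchange the roles of `Y` and `Ȳ`.
    refine absurd ?_ (not_inverse_overlap (u := fun k => v (s + 1 + k)) (fun k => hv _) hm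
      (t := L - (s + 1)) (by omega))
    intro k hk
    rw [hvQ (m - 1 - k) (by omega), bar_bar, show m - 1 - (m - 1 - k) = k by omega,
      show s + 1 + (L - (s + 1) + k) = k + L by omega, hv_periodic]
  · have hdrop : Z.drop (s - m) <+: V.rotate s := by
      rw [List.rotate_eq_drop_append_take hs.le, List.drop_append,
        List.drop_eq_nil_of_le (as := Y) hm_le, List.nil_append]
      exact List.prefix_append _ _
    have hfits : q₁ :: (wordInv Y ++ [q₂]) <+: Z.drop (s - m) :=
      List.prefix_of_prefix_length_le hQ hdrop (by simp [wordInv, V, L, m] at hfit ⊢; omega)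
    exact hfits.isInfix.trans (List.drop_suffix _ _).isInfix

theorem linked_pair_type3_decomposition_general {n : ℕ} (O W : List (Letter n))
    (hW : CyclicallyReduced W)
    (p₁ p₂ q₁ q₂ x₁ x₂ : Letter n) (Y : List (Letter n))
    (h3 : Linked3 O p₁ p₂ q₁ q₂ x₁ x₂ Y)
    (i j : ℕ)
    (hP : (p₁ :: (Y ++ [p₂])) <+: W.rotate i)
    (hQ : (q₁ :: (wordInv Y ++ [q₂])) <+: W.rotate j) :
    ∃ W₁ W₂ : List (Letter n), W₁ ≠ [] ∧ W₂ ≠ [] ∧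
      W₁.head? = some p₂ ∧ W₁.getLast? = some q₁ ∧
      W₂.head? = some q₂ ∧ W₂.getLast? = some p₁ ∧
      W.rotate ((i + 1) % W.length) = Y ++ W₁ ++ wordInv Y ++ W₂ := by
  obtain ⟨R, hR⟩ := exists_rotate_succ_eq_of_prefix hP
  have hV : W.rotate (i + 1) = Y ++ p₂ :: (R ++ [p₁]) := by simp [hR]
  obtain ⟨s, hs⟩ : W.rotate (i + 1) ~r W.rotate j :=
    (List.IsRotated.forall W (i + 1)).trans (List.IsRotated.forall W j).symm
  rw [← hs, hV] at hQ
  obtain ⟨A, B, hAB⟩ := isInfix_of_isPrefix_rotate_append (hV ▸ hW.rotate (i + 1)) h3.1 hQ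
  refine ⟨A ++ [q₁], q₂ :: B, by simp, by simp, ?_, by simp, rfl, ?_, ?_⟩
  · rcases A with _ | ⟨a, A⟩ <;> simp_all
  · have hlast := congrArg List.getLast? hAB
    rw [show A ++ q₁ :: (wordInv Y ++ [q₂]) ++ B = (A ++ q₁ :: wordInv Y) ++ q₂ :: B by simp,
      List.getLast?_append_of_ne_nil _ (List.cons_ne_nil _ _)] at hlast
    rw [hlast, ← List.cons_append, List.getLast?_concat]
  · rw [List.rotate_mod, hV, ← hAB]
    simp

/-- Lemma 2.3: if `(P,Q) = (p₁Yp₂, q₁Ȳq₂)` is a linked pair of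
type (3) of occurrences of subwords of a reduced cyclic word `W`, then
`W = c(Y W₁ Ȳ W₂)` with `W₁`, `W₂` disjoint nonempty linear subwords of `W`
(`W₁` starting at `p₂` and ending at `q₁`, `W₂` starting at `q₂` and ending
at `p₁`). -/
theorem linked_pair_type3_decomposition {n : ℕ} (O W : List (Letter n))
    (hO : SurfaceSymbol O) (hW : CyclicallyReduced W)
    (p₁ p₂ q₁ q₂ x₁ x₂ : Letter n) (Y : List (Letter n))
    (h3 : Linked3 O p₁ p₂ q₁ q₂ x₁ x₂ Y)
    (i j : ℕ) (hi : i < W.length) (hj : j < W.length)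
    (hlenP : Y.length + 2 ≤ W.length) (hlenQ : Y.length + 2 ≤ W.length)
    (hP : (p₁ :: (Y ++ [p₂])) <+: W.rotate i)
    (hQ : (q₁ :: (wordInv Y ++ [q₂])) <+: W.rotate j) :
    ∃ W₁ W₂ : List (Letter n), W₁ ≠ [] ∧ W₂ ≠ [] ∧
      W₁.head? = some p₂ ∧ W₁.getLast? = some q₁ ∧
      W₂.head? = some q₂ ∧ W₂.getLast? = some p₁ ∧
      W.rotate ((i + 1) % W.length) = Y ++ W₁ ++ wordInv Y ++ W₂ :=
  linked_pair_type3_decomposition_general O W hW p₁ p₂ q₁ q₂ x₁ x₂ Y h3 i j hP hQ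

end ChasCW
end

section
/- For reduced cyclic words V and W, every linked pair (P,Q) ∈ LP₂(V,W) satisfies: P is a subword of V^j and Q is a subword of W^k with j < 2 + len(W)/len(V) and k < 2 + len(V)/len(W). -/
/-!
Combinatorial model of the Goldman–Turaev Lie bialgebra of curves on a surface
with boundary, following M. Chas, "Combinatorial Lie bialgebras of curves on
surfaces".

The alphabet `𝔸ₙ = {a₁,…,aₙ, ā₁,…,āₙ}` is modelled by `Letter n := Fin n × Bool`,
with the bar involution flipping the boolean.  Linear words are lists of letters;
a cyclic word is a list up to rotation (`List.IsRotated`).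
-/

open List

/-!
If a linked pair `(P, Q)` is longer than `len V + len W`, its two interiors coincide (possibly
after inverting `Q`) on a common stretch of length at least `len V + len W - 1` of the periodic
words `V^ℤ` and `W^ℤ`. By Euclid's algorithm on the periods `len V` and `len W` (the weak
Fine–Wilf theorem), two periodic sequences agreeing on such a stretch also agree on the letter
just before it; this contradicts the condition `p₁ ≠ q₁` (resp. `p₁ ≠ q̄₂`) of Definition 2.1.
-/

theorem List.getElem?_flatten_replicate {α : Type*} (V : List α) {k s : ℕ}
    (hs : s < k * V.length) : (replicate k V).flatten[s]? = V[s % V.length]? := by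
  induction k generalizing s with
  | zero => simp at hs
  | succ k ih =>
    rw [replicate_succ, flatten_cons]
    rcases lt_or_ge s V.length with h | h
    · rw [getElem?_append_left h, Nat.mod_eq_of_lt h]
    · rw [getElem?_append_right h, ih (by rw [Nat.succ_mul] at hs; omega),
        ← Nat.mod_eq_sub_mod h]

theorem apply_pred_eq_of_local_periods {α : Type*} {h : ℕ → α} {N p q : ℕ}
    (hp : ∀ t, t + p < N → h (t + p) = h t) (hq : ∀ t, t + q < N → h (t + q) = h t)
    (hp0 : 0 < p) (hq0 : 0 < q) (hN : p + q ≤ N + 1) : h (p - 1) = h (q - 1) := by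
  induction hs : p + q using Nat.strong_induction_on generalizing p q N with
  | _ s ih =>
  wlog hpq : p ≤ q generalizing p q
  · exact (this hq hp hq0 hp0 (by omega) (by omega) (by omega)).symm
  obtain rfl | hlt := hpq.eq_or_lt
  · rfl
  have hdiff : ∀ t, t + (q - p) < N - p → h (t + (q - p)) = h t := fun t ht => by
    have := hp (t + (q - p)) (by omega)
    rw [show t + (q - p) + p = t + q by omega] at this
    exact this.symm.trans (hq t (by omega))
  calc h (p - 1) = h (q - p - 1) :=
        ih q (by omega) (fun t ht => hp t (by omega)) hdiff hp0 (by omega) (by omega) (by omega)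
    _ = h (q - 1) := by
        simpa [show q - p - 1 + p = q - 1 by omega] using (hp (q - p - 1) (by omega)).symm

theorem Function.Periodic.apply_zero_eq_of_agree {β : Type*} {f g : ℤ → β} {p q m : ℕ}
    (hf : Function.Periodic f p) (hg : Function.Periodic g q) (hp : 0 < p) (hq : 0 < q)
    (hm : p + q ≤ m + 1) (hfg : ∀ t : ℕ, t < m → f (t + 1) = g (t + 1)) : f 0 = g 0 := by
  have key := apply_pred_eq_of_local_periods (h := fun t : ℕ => f (t + 1)) (N := m)
    (fun t _ => by simpa [add_right_comm] using hf (t + 1))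
    (fun t ht => by
      have hfg' := hfg (t + q) (by omega)
      push_cast at hfg' ⊢
      rw [hfg', hfg t (by omega), ← hg (t + 1), add_right_comm])
    hp hq hm
  have hp1 : ((p - 1 : ℕ) : ℤ) + 1 = p := by omega
  have hq1 : ((q - 1 : ℕ) : ℤ) + 1 = q := by omega
  simp only [hp1, hq1] at key
  calc f 0 = f p := hf.eq.symm
    _ = f q := key
    _ = g q := by simpa [hq1] using hfg (q - 1) (by omega)
    _ = g 0 := hg.eq

theorem Function.Periodic.length_le_of_head_ne {α : Type*} {f g : ℤ → Option α} {p q : ℕ}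
    (hf : Function.Periodic f p) (hg : Function.Periodic g q) (hp : 0 < p) (hq : 0 < q)
    {x y z z' : α} {Y : List α}
    (hfx : ∀ t : ℕ, t < (x :: (Y ++ [z])).length → f t = (x :: (Y ++ [z]))[t]?)
    (hgy : ∀ t : ℕ, t < (y :: (Y ++ [z'])).length → g t = (y :: (Y ++ [z']))[t]?) (hxy : x ≠ y) :
    (x :: (Y ++ [z])).length ≤ p + q := by
  by_contra! hlen
  simp only [length_cons, length_append, length_nil] at hlen
  refine hxy (Option.some_injective _ ?_)
  have := hf.apply_zero_eq_of_agree hg hp hq (m := Y.length) (by omega) fun t ht => by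
    have hf' := hfx (t + 1) (by simp; omega)
    have hg' := hgy (t + 1) (by simp; omega)
    push_cast at hf' hg'
    rw [hf', hg']
    simp [getElem?_append_left ht]
  have hx := hfx 0 (by simp)
  have hy := hgy 0 (by simp)
  simp only [Nat.cast_zero] at hx hy
  simpa [hx, hy] using this

namespace ChasCW

variable {n : ℕ}

def periodicExt {α : Type*} (V : List α) (k : ℤ) : Option α := V[(k : ZMod V.length).val]?

theorem periodicExt_periodic {α : Type*} (V : List α) :
    Function.Periodic (periodicExt V) V.length := by
  intro k
  simp [periodicExt]

theorem periodicExt_natCast {α : Type*} (V : List α) (s : ℕ) :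
    periodicExt V s = V[s % V.length]? := by
  simp [periodicExt, ZMod.val_natCast]

theorem segment_nil (i l : ℕ) : segment ([] : List (Letter n)) i l = [] := by
  simp [segment]

theorem length_segment {V : List (Letter n)} (hV : V ≠ []) (i l : ℕ) :
    (segment V i l).length = l := by
  have : l < (l + 1) * V.length := by
    have := List.length_pos_iff.2 hV
    nlinarith
  simp [segment, length_flatten, this.le]

theorem getElem?_segment (V : List (Letter n)) (i : ℕ) {l t : ℕ} (ht : t < l) :
    (segment V i l)[t]? = periodicExt V (t + i) := by
  rcases eq_or_ne V [] with rfl | hV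
  · simp [segment, periodicExt]
  have hlen : ((replicate (l + 1) V).flatten).length = (l + 1) * V.length := by
    simp [length_flatten]
  have hpos := List.length_pos_iff.2 hV
  rw [segment, getElem?_take, if_pos ht, getElem?_rotate (by rw [hlen]; nlinarith),
    getElem?_flatten_replicate _ (hlen ▸ Nat.mod_lt _ (by nlinarith)), hlen,
    Nat.mod_mod_of_dvd _ (Dvd.intro_left _ rfl), ← Nat.cast_add, periodicExt_natCast]

theorem getElem?_wordInv {w : List (Letter n)} {t : ℕ} (ht : t < w.length) :
    (wordInv w)[t]? = w[w.length - 1 - t]?.map bar := by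
  rw [wordInv, getElem?_reverse (by simpa using ht), getElem?_map, length_map]

theorem wordInv_cons_wordInv_append (x z : Letter n) (Y : List (Letter n)) :
    wordInv (x :: (wordInv Y ++ [z])) = bar z :: (Y ++ [bar x]) := by
  simp [wordInv, bar, Function.comp_def]

namespace LinkedPair

variable {O P Q : List (Letter n)}

theorem length_eq (h : LinkedPair O P Q) : P.length = Q.length := by
  rcases h with ⟨_, _, _, _, rfl, rfl, _⟩ | ⟨_, _, _, _, _, _, _, rfl, rfl, _⟩ |
    ⟨_, _, _, _, _, _, _, rfl, rfl, _⟩ <;> simp [wordInv]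

theorem two_le_length (h : LinkedPair O P Q) : 2 ≤ P.length := by
  rcases h with ⟨_, _, _, _, rfl, -⟩ | ⟨_, _, _, _, _, _, _, rfl, -⟩ |
    ⟨_, _, _, _, _, _, _, rfl, -⟩ <;> simp

theorem length_le_of_periodic {f g : ℤ → Option (Letter n)} {p q : ℕ}
    (hf : Function.Periodic f p) (hg : Function.Periodic g q) (hp : 0 < p) (hq : 0 < q)
    (hfP : ∀ t : ℕ, t < P.length → f t = P[t]?) (hgQ : ∀ t : ℕ, t < Q.length → g t = Q[t]?)
    (h : LinkedPair O P Q) : P.length ≤ p + q := by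
  rcases h with ⟨_, _, _, _, rfl, -⟩ |
    ⟨p₁, p₂, q₁, q₂, -, -, Y, rfl, rfl, -, -, -, hpq, -⟩ |
    ⟨p₁, p₂, q₁, q₂, -, -, Y, rfl, rfl, -, -, -, hpq, -⟩
  · simp only [length_cons, length_nil]
    omega
  · exact hf.length_le_of_head_ne hg hp hq hfP hgQ hpq
  · -- reading `Q` backwards in `W^ℤ` reduces case (3) to case (2)
    set Q := q₁ :: (wordInv Y ++ [q₂]) with hQ
    have hQlen : Q.length = Y.length + 2 := by simp [hQ, wordInv]
    refine hf.length_le_of_head_ne ((hg.const_sub (Q.length - 1)).comp (Option.map bar)) hp hq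
      (z' := bar q₁) hfP (fun t ht => ?_) hpq
    have htQ : t < Q.length := by
      simp only [length_cons, length_append, length_nil] at ht
      omega
    rw [← wordInv_cons_wordInv_append, ← hQ, getElem?_wordInv htQ, ← hgQ _ (by omega)]
    simp only [Function.comp_apply]
    congr 2
    omega

end LinkedPair

theorem lt_two_add_div_of_mul_sub_one_lt {K : Type*} [Field K] [LinearOrder K]
    [IsStrictOrderedRing K] {v w a : ℕ} (hv : 0 < v) (h : v * (a - 1) < v + w) :
    (a : K) < 2 + w / v := by
  have hv' : (0 : K) < v := by exact_mod_cast hv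
  have key : (v : K) * a < 2 * v + w := by
    rw [Nat.mul_sub_one] at h
    exact_mod_cast (show v * a < 2 * v + w by omega)
  rw [← sub_lt_iff_lt_add', lt_div_iff₀ hv']
  linarith

theorem LP2_power_bound_general {n : ℕ} (O V W : List (Letter n))
    (e : (ℕ × ℕ) × (ℕ × ℕ)) (he : e ∈ LP2 O V W)
    (a b : ℕ) (ha1 : V.length * (a - 1) < e.1.2)
    (hb1 : W.length * (b - 1) < e.2.2) :
    (a : ℚ) < 2 + (W.length : ℚ) / (V.length : ℚ) ∧
      (b : ℚ) < 2 + (V.length : ℚ) / (W.length : ℚ) := by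
  obtain ⟨-, -, hPQ⟩ := he
  have hV : V ≠ [] := by
    rintro rfl
    simpa [segment_nil] using hPQ.two_le_length
  have hW : W ≠ [] := by
    rintro rfl
    simpa [segment_nil, hPQ.length_eq] using hPQ.two_le_length
  have hl : e.1.2 = e.2.2 := by
    simpa [length_segment hV, length_segment hW] using hPQ.length_eq
  have hbound : e.1.2 ≤ V.length + W.length := by
    simpa [length_segment hV] using hPQ.length_le_of_periodic
      ((periodicExt_periodic V).add_const _) ((periodicExt_periodic W).add_const _)
      (length_pos_iff.2 hV) (length_pos_iff.2 hW)
      (fun t ht => (getElem?_segment V _ (by rwa [length_segment hV] at ht)).symm)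
      (fun t ht => (getElem?_segment W _ (by rwa [length_segment hW] at ht)).symm)
  exact ⟨lt_two_add_div_of_mul_sub_one_lt (length_pos_iff.2 hV) (ha1.trans_le hbound),
    lt_two_add_div_of_mul_sub_one_lt (length_pos_iff.2 hW) (by omega)⟩

/-- Proposition 2.12: every linked pair
`((i, len P), (j', len Q)) ∈ LP₂(V,W)`, where `P` is a subword of `V^a` with
`len V^{a-1} < len P ≤ len V^a` and `Q` is a subword of `W^b` with
`len W^{b-1} < len Q ≤ len W^b`, satisfies `a < 2 + len W / len V` and
`b < 2 + len V / len W`. -/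
theorem LP2_power_bound {n : ℕ} (O V W : List (Letter n))
    (hO : SurfaceSymbol O) (hV : CyclicallyReduced V) (hW : CyclicallyReduced W)
    (e : (ℕ × ℕ) × (ℕ × ℕ)) (he : e ∈ LP2 O V W)
    (a b : ℕ) (ha : 1 ≤ a) (hb : 1 ≤ b)
    (ha1 : V.length * (a - 1) < e.1.2) (ha2 : e.1.2 ≤ V.length * a)
    (hb1 : W.length * (b - 1) < e.2.2) (hb2 : e.2.2 ≤ W.length * b) :
    (a : ℚ) < 2 + (W.length : ℚ) / (V.length : ℚ) ∧
      (b : ℚ) < 2 + (V.length : ℚ) / (W.length : ℚ) :=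
  LP2_power_bound_general O V W e he a b ha1 hb1

end ChasCW
end

section
/- With surface symbol O = c(a₁a₂ā₁ā₂a₃a₄ā₃ā₄), the set LP₂(c(a₁ā₃), c(a₂ā₄)) has exactly four elements: (a₁ā₃, a₂ā₄), (a₁ā₃, ā₄a₂), (ā₃a₁, a₂ā₄), (ā₃a₁, ā₄a₂); in particular the upper bound len(V)·len(W) = 4 of the counting proposition is attained. -/
/-!
Combinatorial model of the Goldman–Turaev Lie bialgebra of curves on a surface
with boundary, following M. Chas, "Combinatorial Lie bialgebras of curves on
surfaces".

The alphabet `𝔸ₙ = {a₁,…,aₙ, ā₁,…,āₙ}` is modelled by `Letter n := Fin n × Bool`,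
with the bar involution flipping the boolean.  Linear words are lists of letters;
a cyclic word is a list up to rotation (`List.IsRotated`).
-/

open List

/-!
No letter of `V = a₁ā₃` occurs in `W = a₂ā₄` or in its inverse, whereas linked pairs of
types (2) and (3) share a nonempty middle word `Y` (up to inversion). Hence every linked
pair of subwords of powers of `V` and `W` is of type (1), so both occurrences have length
two and there are at most `2 · 2` of them; each of the four candidates is linked, since the
corresponding word `p̄₁q̄₁p₂q₂` embeds in `O` or in its reverse.
-/

namespace ChasCW

variable {n : ℕ}

instance (w O : List (Letter n)) : Decidable (CyclicEmbeds w O) :=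
  inferInstanceAs (Decidable (w.Nodup ∧ _))

theorem reduced_pair_iff {x y : Letter n} : Reduced [x, y] ↔ y ≠ bar x :=
  List.isChain_pair

theorem orient_ne_zero_iff {O w : List (Letter n)} :
    orient O w ≠ 0 ↔ CyclicEmbeds w O ∨ CyclicEmbeds w O.reverse := by
  unfold orient
  split_ifs <;> simp_all

theorem linked1_iff {O : List (Letter n)} {p₁ p₂ q₁ q₂ : Letter n} :
    Linked1 O p₁ p₂ q₁ q₂ ↔ p₂ ≠ bar p₁ ∧ q₂ ≠ bar q₁ ∧
      (CyclicEmbeds [bar p₁, bar q₁, p₂, q₂] O ∨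
        CyclicEmbeds [bar p₁, bar q₁, p₂, q₂] O.reverse) := by
  rw [Linked1, reduced_pair_iff, reduced_pair_iff, orient_ne_zero_iff]

theorem linkedPair_pair_iff {O : List (Letter n)} {p₁ p₂ q₁ q₂ : Letter n} :
    LinkedPair O [p₁, p₂] [q₁, q₂] ↔ Linked1 O p₁ p₂ q₁ q₂ := by
  constructor
  · rintro (⟨_, _, _, _, hP, hQ, h⟩ | ⟨_, _, _, _, _, _, Y, hP, -, hY, -⟩ |
      ⟨_, _, _, _, _, _, Y, hP, -, hY, -⟩)
    · simp only [List.cons.injEq, and_true] at hP hQ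
      obtain ⟨rfl, rfl⟩ := hP
      obtain ⟨rfl, rfl⟩ := hQ
      exact h
    all_goals
      have := congrArg List.length hP
      simp only [List.length_cons, List.length_append, List.length_nil] at this
      exact absurd (List.length_eq_zero_iff.mp (by omega)) hY
  · exact fun h => Or.inl ⟨_, _, _, _, rfl, rfl, h⟩

theorem LinkedPair.length_eq_two {O P Q : List (Letter n)} (hPQ : LinkedPair O P Q)
    (hdisj : ∀ x ∈ P, x ∉ Q ∧ bar x ∉ Q) : P.length = 2 ∧ Q.length = 2 := by
  rcases hPQ with ⟨_, _, _, _, rfl, rfl, -⟩ | ⟨_, _, _, _, x, _, Y, rfl, rfl, -, hx, -⟩ |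
      ⟨_, _, _, _, x, _, Y, rfl, rfl, -, hx, -⟩
  · exact ⟨rfl, rfl⟩
  · have hxY : x ∈ Y := List.mem_of_mem_head? hx
    exact absurd (by simp [hxY]) (hdisj x (by simp [hxY])).1
  · have hxY : x ∈ Y := List.mem_of_mem_head? hx
    have hxQ : bar x ∈ wordInv Y := List.mem_reverse.2 (List.mem_map_of_mem hxY)
    exact absurd (by simp [hxQ]) (hdisj x (by simp [hxY])).2

theorem mem_of_mem_segment {V : List (Letter n)} {i l : ℕ} {x : Letter n}
    (h : x ∈ segment V i l) : x ∈ V := by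
  obtain ⟨L, hL, hx⟩ := List.mem_flatten.mp (List.mem_rotate.mp (List.mem_of_mem_take h))
  rwa [List.eq_of_mem_replicate hL] at hx

theorem mem_LP2_iff_of_disjoint {O V W : List (Letter n)} (hV : V ≠ []) (hW : W ≠ [])
    (hdisj : ∀ x ∈ V, x ∉ W ∧ bar x ∉ W) {e : (ℕ × ℕ) × (ℕ × ℕ)} :
    e ∈ LP2 O V W ↔ e.1.1 < V.length ∧ e.2.1 < W.length ∧ e.1.2 = 2 ∧ e.2.2 = 2 ∧
      LinkedPair O (segment V e.1.1 2) (segment W e.2.1 2) := by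
  obtain ⟨⟨i, l⟩, j, m⟩ := e
  refine ⟨fun ⟨hi, hj, h⟩ => ?_, fun ⟨hi, hj, hl, hm, h⟩ => ⟨hi, hj, hl ▸ hm ▸ h⟩⟩
  have hlen := h.length_eq_two fun x hx =>
    ⟨fun hxW => (hdisj x (mem_of_mem_segment hx)).1 (mem_of_mem_segment hxW),
     fun hxW => (hdisj x (mem_of_mem_segment hx)).2 (mem_of_mem_segment hxW)⟩
  rw [length_segment hV, length_segment hW] at hlen
  obtain ⟨rfl, rfl⟩ := hlen
  exact ⟨hi, hj, rfl, rfl, h⟩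

/-- Example 2.8, second part: with surface symbol
`O = c(a₁a₂ā₁ā₂a₃a₄ā₃ā₄)`, the set `LP₂(c(a₁ā₃), c(a₂ā₄))` consists of exactly
the four linked pairs `(a₁ā₃, a₂ā₄)`, `(a₁ā₃, ā₄a₂)`, `(ā₃a₁, a₂ā₄)`,
`(ā₃a₁, ā₄a₂)` (encoded by their occurrences); in particular the upper bound
`len V · len W = 4` of Proposition 2.7(a) is attained. -/
theorem LP2_example_four_elements :
    let a : Fin 4 → Letter 4 := fun i => (i, true)
    let O : List (Letter 4) :=
      [a 0, a 1, bar (a 0), bar (a 1), a 2, a 3, bar (a 2), bar (a 3)]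
    let V : List (Letter 4) := [a 0, bar (a 2)]
    let W : List (Letter 4) := [a 1, bar (a 3)]
    segment V 0 2 = [a 0, bar (a 2)] ∧ segment V 1 2 = [bar (a 2), a 0] ∧
    segment W 0 2 = [a 1, bar (a 3)] ∧ segment W 1 2 = [bar (a 3), a 1] ∧
    LP2 O V W =
      {((0, 2), (0, 2)), ((0, 2), (1, 2)), ((1, 2), (0, 2)), ((1, 2), (1, 2))} ∧
    (LP2 O V W).ncard = V.length * W.length := by
  intro a O V W
  have hV0 : segment V 0 2 = [a 0, bar (a 2)] := by decide
  have hV1 : segment V 1 2 = [bar (a 2), a 0] := by decide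
  have hW0 : segment W 0 2 = [a 1, bar (a 3)] := by decide
  have hW1 : segment W 1 2 = [bar (a 3), a 1] := by decide
  have hLP2 : LP2 O V W =
      {((0, 2), (0, 2)), ((0, 2), (1, 2)), ((1, 2), (0, 2)), ((1, 2), (1, 2))} := by
    ext ⟨⟨i, l⟩, j, m⟩
    rw [mem_LP2_iff_of_disjoint (by decide) (by decide) (by decide)]
    simp only [Set.mem_insert_iff, Set.mem_singleton_iff, Prod.mk.injEq]
    constructor
    · rintro ⟨hi, hj, rfl, rfl, -⟩
      change i < 2 at hi; change j < 2 at hj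
      interval_cases i <;> interval_cases j <;> simp
    · rintro (⟨⟨rfl, rfl⟩, rfl, rfl⟩ | ⟨⟨rfl, rfl⟩, rfl, rfl⟩ | ⟨⟨rfl, rfl⟩, rfl, rfl⟩ |
        ⟨⟨rfl, rfl⟩, rfl, rfl⟩) <;>
      refine ⟨by decide, by decide, rfl, rfl, ?_⟩ <;>
      simp only [hV0, hV1, hW0, hW1, linkedPair_pair_iff, linked1_iff] <;> decide
  refine ⟨hV0, hV1, hW0, hW1, hLP2, ?_⟩
  rw [hLP2]
  simp [Set.ncard_insert_of_notMem, V, W]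

end ChasCW
end

section
/- With surface symbol O = c(a₁a₂ā₁ā₂a₃a₄ā₃ā₄), the bracket of the cyclic words c(a₁a₂a₂a₃) and c(ā₂ā₂) equals -2·c(a₃a₁); moreover LP₂(c(a₁a₂a₂a₃), c(ā₂ā₂)) consists of exactly two linked pairs, both of type (3), namely two occurrences of (a₁a₂a₂a₃, ā₂ā₂ā₂ā₂). -/
/-!
Combinatorial model of the Goldman–Turaev Lie bialgebra of curves on a surface
with boundary, following M. Chas, "Combinatorial Lie bialgebras of curves on
surfaces".

The alphabet `𝔸ₙ = {a₁,…,aₙ, ā₁,…,āₙ}` is modelled by `Letter n := Fin n × Bool`,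
with the bar involution flipping the boolean.  Linear words are lists of letters;
a cyclic word is a list up to rotation (`List.IsRotated`).
-/

open List

namespace ChasCW

variable {n : ℕ}

/-- The glued cyclic word `γ(P,Q)` of a linked pair of occurrences
`e = ((i, len P), (j, len Q)) ∈ LP₂(V,W)` (Section 2.3).  In cases (1),(2) it is
`c(V₁W₁)` where `V₁`, `W₁` are the representatives of `V`, `W` cut immediately
before `p₂`, resp. `q₂`; in case (3) (detected by the middle of `Q` being the
inverse of the middle `Y` of `P`) it is `c(V₁W₁)` with `V₁` the subword of `V`
complementary to `Y` and `W₁` the subword of `W` complementary to `Ȳ`. -/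
def gammaLP (V W : List (Letter n)) (e : (ℕ × ℕ) × (ℕ × ℕ)) : List (Letter n) :=
  let i := e.1.1; let lp := e.1.2; let j := e.2.1; let lq := e.2.2
  let P := segment V i lp
  let Q := segment W j lq
  let Y := (P.drop 1).dropLast
  if 3 ≤ lp ∧ (Q.drop 1).dropLast = wordInv Y then
    segment V ((i + 1 + Y.length) % V.length)
      ((V.length - Y.length % V.length) % V.length) ++
    segment W ((j + 1 + Y.length) % W.length)
      ((W.length - Y.length % W.length) % W.length)
  else
    V.rotate ((i + lp - 1) % V.length) ++ W.rotate ((j + lq - 1) % W.length)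

/-- The first cyclic word `δ₁(P,Q)` obtained by cutting `W` along the linked
pair of occurrences `e ∈ LP₁(W)`. -/
def delta1 (W : List (Letter n)) (e : (ℕ × ℕ) × (ℕ × ℕ)) : List (Letter n) :=
  let m := W.length
  let i := e.1.1; let lp := e.1.2; let j := e.2.1; let lq := e.2.2
  let P := segment W i lp
  let Q := segment W j lq
  let Y := (P.drop 1).dropLast
  let c₁ := (i + lp - 1) % m
  let c₂ := (j + lq - 1) % m
  if 3 ≤ lp ∧ (Q.drop 1).dropLast = wordInv Y then
    (W.rotate c₁).take (((j + m - c₁) % m) + 1)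
  else
    (W.rotate c₁).take ((c₂ + m - c₁) % m)

/-- The second cyclic word `δ₂(P,Q)` obtained by cutting `W` along the linked
pair of occurrences `e ∈ LP₁(W)`. -/
def delta2 (W : List (Letter n)) (e : (ℕ × ℕ) × (ℕ × ℕ)) : List (Letter n) :=
  let m := W.length
  let i := e.1.1; let lp := e.1.2; let j := e.2.1; let lq := e.2.2
  let P := segment W i lp
  let Q := segment W j lq
  let Y := (P.drop 1).dropLast
  let c₁ := (i + lp - 1) % m
  let c₂ := (j + lq - 1) % m
  if 3 ≤ lp ∧ (Q.drop 1).dropLast = wordInv Y then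
    (W.rotate c₂).take (((i + m - c₂) % m) + 1)
  else
    (W.rotate c₂).take ((c₁ + m - c₂) % m)

open Classical in
/-- `LP₁(W)` as a finite set. -/
noncomputable def LP1F (O W : List (Letter n)) : Finset ((ℕ × ℕ) × (ℕ × ℕ)) :=
  ((Finset.range W.length ×ˢ Finset.range (W.length + 1)) ×ˢ
   (Finset.range W.length ×ˢ Finset.range (W.length + 1))).filter
    (fun e => LinkedPair O (segment W e.1.1 e.1.2) (segment W e.2.1 e.2.2))

open Classical in
/-- `LP₂(V,W)` as a finite set (subword lengths are `< len V + len W` by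
Proposition 2.12). -/
noncomputable def LP2F (O V W : List (Letter n)) : Finset ((ℕ × ℕ) × (ℕ × ℕ)) :=
  ((Finset.range V.length ×ˢ Finset.range (V.length + W.length)) ×ˢ
   (Finset.range W.length ×ˢ Finset.range (V.length + W.length))).filter
    (fun e => LinkedPair O (segment V e.1.1 e.1.2) (segment W e.2.1 e.2.2))

/-- The combinatorial Turaev cobracket
`δ(W) = ∑_{(P,Q) ∈ LP₁(W)} sign(P,Q) δ₁(P,Q) ⊗ δ₂(P,Q)`, with values in the
tensor square of the vector space with basis the cyclic words, realized as the
free vector space on pairs of cyclic words (`single (c₁, c₂) 1 = c₁ ⊗ c₂`). -/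
noncomputable def cobracket (O W : List (Letter n)) :
    (CWord n × CWord n) →₀ ℚ :=
  ∑ e ∈ LP1F O W,
    (signLP O (segment W e.1.1 e.1.2) (segment W e.2.1 e.2.2)) •
      Finsupp.single (cw (delta1 W e), cw (delta2 W e)) (1 : ℚ)

/-- The combinatorial Goldman bracket
`[V,W] = ∑_{(P,Q) ∈ LP₂(V,W)} sign(P,Q) γ(P,Q)`. -/
noncomputable def bracket (O V W : List (Letter n)) : CWord n →₀ ℚ :=
  ∑ e ∈ LP2F O V W,
    (signLP O (segment V e.1.1 e.1.2) (segment W e.2.1 e.2.2)) •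
      Finsupp.single (cw (gammaLP V W e)) (1 : ℚ)

end ChasCW


/-!
Everything here is a finite computation. A word of length at least two splits uniquely as
`p₁Yp₂`, so whether `(P, Q)` is linked is a decidable condition on the two splits, and
`LP2F` ranges over a finite box of occurrences; exhaustive search leaves exactly the two
type-(3) pairs `(a₁a₂a₂a₃, ā₂ā₂ā₂ā₂)` starting at positions `0` and `1` of `c(ā₂ā₂)²`.
Both have sign `o(c(ā₂ā₁a₂)) = -1` and glue to `c(a₃a₁)`.
-/

namespace List

variable {α : Type*}

def splitEnds : List α → Option (α × List α × α)
  | [] => none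
  | a :: l => l.getLast?.map fun b => (a, l.dropLast, b)

theorem mem_splitEnds {l m : List α} {a b : α} :
    (a, m, b) ∈ l.splitEnds ↔ l = a :: (m ++ [b]) := by
  rcases l with _ | ⟨c, l⟩
  · simp [splitEnds]
  rcases l.eq_nil_or_concat with rfl | ⟨L, x, rfl⟩
  · simp [splitEnds]
  · simp [splitEnds, eq_comm, and_comm]

end List

namespace ChasCW

variable {n : ℕ}

-- `orient` and `LP2F` are defined with classical decidability, which `decide` cannot evaluate;
-- the instances below and `LP2F_eq_filter` substitute computable decisions.
instance inst_s18 (w O : List (Letter n)) : Decidable (CyclicEmbeds w O) := by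
  unfold CyclicEmbeds; infer_instance

instance (w : List (Letter n)) : Decidable (Reduced w) :=
  inferInstanceAs (Decidable (w.IsChain _))

theorem orient_eq_ite (O w : List (Letter n)) :
    orient O w = if CyclicEmbeds w O then 1 else if CyclicEmbeds w O.reverse then -1 else 0 := by
  unfold orient; congr

instance (O w : List (Letter n)) (k : ℤ) : Decidable (orient O w = k) :=
  decidable_of_iff _ (congrArg (· = k) (orient_eq_ite O w)).symm.to_iff

instance (O u w : List (Letter n)) : Decidable (orient O u = orient O w) :=
  decidable_of_iff _ (congrArg₂ (· = ·) (orient_eq_ite O u) (orient_eq_ite O w)).symm.to_iff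

instance (O : List (Letter n)) (p₁ p₂ q₁ q₂ : Letter n) : Decidable (Linked1 O p₁ p₂ q₁ q₂) := by
  unfold Linked1; infer_instance

instance (O : List (Letter n)) (p₁ p₂ q₁ q₂ x₁ x₂ : Letter n) (Y : List (Letter n)) :
    Decidable (Linked2 O p₁ p₂ q₁ q₂ x₁ x₂ Y) := by
  unfold Linked2; infer_instance

instance (O : List (Letter n)) (p₁ p₂ q₁ q₂ x₁ x₂ : Letter n) (Y : List (Letter n)) :
    Decidable (Linked3 O p₁ p₂ q₁ q₂ x₁ x₂ Y) := by
  unfold Linked3; infer_instance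

def LinkedEnds (O : List (Letter n)) :
    Letter n × List (Letter n) × Letter n → Letter n × List (Letter n) × Letter n → Prop
  | (p₁, Y, p₂), (q₁, Z, q₂) =>
    (Y = [] ∧ Z = [] ∧ Linked1 O p₁ p₂ q₁ q₂) ∨
    (Z = Y ∧ ∃ x₁ x₂, Linked2 O p₁ p₂ q₁ q₂ x₁ x₂ Y) ∨
    (Z = wordInv Y ∧ ∃ x₁ x₂, Linked3 O p₁ p₂ q₁ q₂ x₁ x₂ Y)

instance (O : List (Letter n)) : ∀ s t, Decidable (LinkedEnds O s t)
  | (_, _, _), (_, _, _) => by unfold LinkedEnds; infer_instance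

theorem linkedPair_iff_linkedEnds {O P Q : List (Letter n)} :
    LinkedPair O P Q ↔ ∃ s ∈ P.splitEnds, ∃ t ∈ Q.splitEnds, LinkedEnds O s t := by
  constructor
  · rintro (⟨p₁, p₂, q₁, q₂, rfl, rfl, h⟩ | ⟨p₁, p₂, q₁, q₂, x₁, x₂, Y, rfl, rfl, h⟩ |
      ⟨p₁, p₂, q₁, q₂, x₁, x₂, Y, rfl, rfl, h⟩)
    · exact ⟨(p₁, [], p₂), List.mem_splitEnds.2 rfl, (q₁, [], q₂), List.mem_splitEnds.2 rfl,
        .inl ⟨rfl, rfl, h⟩⟩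
    · exact ⟨_, List.mem_splitEnds.2 rfl, _, List.mem_splitEnds.2 rfl, .inr (.inl ⟨rfl, _, _, h⟩)⟩
    · exact ⟨_, List.mem_splitEnds.2 rfl, _, List.mem_splitEnds.2 rfl, .inr (.inr ⟨rfl, _, _, h⟩)⟩
  · rintro ⟨⟨p₁, Y, p₂⟩, hP, ⟨q₁, Z, q₂⟩, hQ, h⟩
    rw [List.mem_splitEnds] at hP hQ
    subst hP hQ
    rcases h with ⟨rfl, rfl, h⟩ | ⟨rfl, _, _, h⟩ | ⟨rfl, _, _, h⟩
    · exact .inl ⟨_, _, _, _, rfl, rfl, h⟩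
    · exact .inr (.inl ⟨_, _, _, _, _, _, _, rfl, rfl, h⟩)
    · exact .inr (.inr ⟨_, _, _, _, _, _, _, rfl, rfl, h⟩)

instance (O P Q : List (Letter n)) : Decidable (LinkedPair O P Q) :=
  decidable_of_iff _ linkedPair_iff_linkedEnds.symm

theorem LP2F_eq_filter (O V W : List (Letter n)) :
    LP2F O V W = ((Finset.range V.length ×ˢ Finset.range (V.length + W.length)) ×ˢ
      (Finset.range W.length ×ˢ Finset.range (V.length + W.length))).filter
        (fun e => LinkedPair O (segment V e.1.1 e.1.2) (segment W e.2.1 e.2.2)) := by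
  unfold LP2F; congr

theorem signLP_type3 (O : List (Letter n)) {p₁ p₂ q₁ q₂ x₁ : Letter n}
    {Y : List (Letter n)} (hY : Y.head? = some x₁) :
    signLP O (p₁ :: (Y ++ [p₂])) (q₁ :: (wordInv Y ++ [q₂])) = orient O [q₂, bar p₁, x₁] := by
  have hne : Y ≠ [] := by rintro rfl; simp at hY
  simp [signLP, hne, hY, List.getLast?_eq_some_getLast hne]

/-- Examples 2.14 and 2.16: with surface symbol
`O = c(a₁a₂ā₁ā₂a₃a₄ā₃ā₄)`, the bracket of `c(a₁a₂a₂a₃)` and `c(ā₂ā₂)` equals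
`-2·c(a₃a₁)`; moreover `LP₂(c(a₁a₂a₂a₃), c(ā₂ā₂))` consists of exactly two
linked pairs, both of type (3), namely two occurrences of the pair
`(a₁a₂a₂a₃, ā₂ā₂ā₂ā₂)` (the word `Q = ā₂ā₂ā₂ā₂` is a subword of `c(ā₂ā₂)²`,
occurring at starting positions `0` and `1`). -/
theorem bracket_example :
    let a : Fin 4 → Letter 4 := fun i => (i, true)
    let O : List (Letter 4) :=
      [a 0, a 1, bar (a 0), bar (a 1), a 2, a 3, bar (a 2), bar (a 3)]
    let V : List (Letter 4) := [a 0, a 1, a 1, a 2]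
    let W : List (Letter 4) := [bar (a 1), bar (a 1)]
    bracket O V W = (-2 : ℚ) • Finsupp.single (cw [a 2, a 0]) 1 ∧
    LP2F O V W = {((0, 4), (0, 4)), ((0, 4), (1, 4))} ∧
    segment V 0 4 = [a 0, a 1, a 1, a 2] ∧
    segment W 0 4 = [bar (a 1), bar (a 1), bar (a 1), bar (a 1)] ∧
    segment W 1 4 = [bar (a 1), bar (a 1), bar (a 1), bar (a 1)] ∧
    Linked3 O (a 0) (a 2) (bar (a 1)) (bar (a 1)) (a 1) (a 1) [a 1, a 1] := by
  intro a O V W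
  have hLP : LP2F O V W = {((0, 4), (0, 4)), ((0, 4), (1, 4))} := by
    rw [LP2F_eq_filter]; decide
  have hsign : ∀ j < 2, signLP O (segment V 0 4) (segment W j 4) = -1 := by
    intro j hj
    have hW : segment W j 4 = bar (a 1) :: (wordInv [a 1, a 1] ++ [bar (a 1)]) := by
      interval_cases j <;> rfl
    rw [show segment V 0 4 = a 0 :: ([a 1, a 1] ++ [a 2]) from rfl, hW, signLP_type3 O rfl]
    decide
  have hgamma : ∀ j < 2, gammaLP V W ((0, 4), (j, 4)) = [a 2, a 0] := by decide
  refine ⟨?_, hLP, rfl, rfl, rfl, by decide⟩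
  rw [bracket, hLP, Finset.sum_pair (by decide), hsign 0 (by norm_num), hsign 1 (by norm_num),
    hgamma 0 (by norm_num), hgamma 1 (by norm_num)]
  module

end ChasCW
end
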